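/- arXiv:1703.03391 — 2 statements merged into one kernel-verified Lean document; each statement's English description precedes it below -/
import Mathlib

section
/- For every first-order formula φ, a model set 𝓜 satisfies φ negatively (𝓜 ⊨⁻ φ) under the model-set semantics if and only if every pair (M,f) ∈ 𝓜 fails to satisfy φ in the standard Tarskian sense. -/
/-- A τ-model together with an assignment: carrier `U`, a domain `dom ⊆ U`,
interpretations of the relation symbols, and an assignment of variables. -/
structure Model (U : Type) (Rel : Type) (ar : Rel → ℕ) where
  dom : Set U
  rel : ∀ r : Rel, (Fin (ar r) → U) → Prop
  asg : ℕ → U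

/-- First-order formulas over a relational signature (variables are `ℕ`). -/
inductive Fml (Rel : Type) (ar : Rel → ℕ) : Type where
  | atom (r : Rel) (v : Fin (ar r) → ℕ)
  | eq (x y : ℕ)
  | and (φ ψ : Fml Rel ar)
  | not (φ : Fml Rel ar)
  | ex (x : ℕ) (φ : Fml Rel ar)

variable {U : Type} {Rel : Type} {ar : Rel → ℕ}

def upd (f : ℕ → U) (x : ℕ) (a : U) : ℕ → U :=
  fun n => if n = x then a else f n

/-- Modify the assignment of a model at variable `x`. -/
def setVar (M : Model U Rel ar) (x : ℕ) (a : U) : Model U Rel ar :=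
  { M with asg := upd M.asg x a }

/-- Standard Tarskian satisfaction. -/
def Tarski : Model U Rel ar → Fml Rel ar → Prop
  | M, .atom r v => M.rel r (fun i => M.asg (v i))
  | M, .eq x y => M.asg x = M.asg y
  | M, .and φ ψ => Tarski M φ ∧ Tarski M ψ
  | M, .not φ => ¬ Tarski M φ
  | M, .ex x φ => ∃ a ∈ M.dom, Tarski (setVar M x a) φ

/-- `𝓜[F/x]` for a choice function `F`. -/
def updSet (𝓜 : Set (Model U Rel ar)) (x : ℕ) (F : Model U Rel ar → U) :
    Set (Model U Rel ar) :=
  (fun M => setVar M x (F M)) '' 𝓜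

/-- `𝓜[⊤/x]`: extend every assignment by every element of the respective domain. -/
def topSet (𝓜 : Set (Model U Rel ar)) (x : ℕ) : Set (Model U Rel ar) :=
  { N | ∃ M ∈ 𝓜, ∃ b ∈ M.dom, N = setVar M x b }

/-- Model-set semantics: `Sat true φ 𝓜` is `𝓜 ⊨⁺ φ` and `Sat false φ 𝓜` is `𝓜 ⊨⁻ φ`. -/
def Sat : Bool → Fml Rel ar → Set (Model U Rel ar) → Prop
  | pos, .atom r v, 𝓜 => ∀ M ∈ 𝓜, (M.rel r (fun i => M.asg (v i)) ↔ pos = true)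
  | pos, .eq x y, 𝓜 => ∀ M ∈ 𝓜, (M.asg x = M.asg y ↔ pos = true)
  | true, .and φ ψ, 𝓜 => Sat true φ 𝓜 ∧ Sat true ψ 𝓜
  | false, .and φ ψ, 𝓜 =>
      ∃ 𝓜' 𝓜'', 𝓜' ∪ 𝓜'' = 𝓜 ∧ Sat false φ 𝓜' ∧ Sat false ψ 𝓜''
  | pos, .not φ, 𝓜 => Sat (!pos) φ 𝓜
  | true, .ex x φ, 𝓜 =>
      ∃ F : Model U Rel ar → U, (∀ M ∈ 𝓜, F M ∈ M.dom) ∧ Sat true φ (updSet 𝓜 x F)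
  | false, .ex x φ, 𝓜 => Sat false φ (topSet 𝓜 x)

lemma flat (φ : Fml Rel ar) : ∀ 𝓜 : Set (Model U Rel ar),
    (Sat true φ 𝓜 ↔ ∀ M ∈ 𝓜, Tarski M φ) ∧
    (Sat false φ 𝓜 ↔ ∀ M ∈ 𝓜, ¬ Tarski M φ) := by
  induction φ with
  | atom r v => intro 𝓜; simp [Sat, Tarski]
  | eq x y => intro 𝓜; simp [Sat, Tarski]
  | and φ ψ ihφ ihψ =>
      intro 𝓜
      constructor
      · simp only [Sat, Tarski, (ihφ 𝓜).1, (ihψ 𝓜).1]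
        constructor
        · rintro ⟨h1, h2⟩ M hM; exact ⟨h1 M hM, h2 M hM⟩
        · intro h; exact ⟨fun M hM => (h M hM).1, fun M hM => (h M hM).2⟩
      · constructor
        · rintro ⟨𝓜', 𝓜'', hu, h1, h2⟩ M hM
          rw [← hu] at hM
          rcases hM with hM | hM
          · exact fun ht => (ihφ 𝓜').2.mp h1 M hM ht.1
          · exact fun ht => (ihψ 𝓜'').2.mp h2 M hM ht.2
        · intro h
          refine ⟨{M ∈ 𝓜 | ¬ Tarski M φ}, {M ∈ 𝓜 | ¬ Tarski M ψ}, ?_, ?_, ?_⟩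
          · ext M
            simp only [Set.mem_union, Set.mem_setOf_eq]
            constructor
            · rintro (⟨h1, _⟩ | ⟨h1, _⟩) <;> exact h1
            · intro hM
              by_cases hφ : Tarski M φ
              · right; exact ⟨hM, fun hψ => h M hM ⟨hφ, hψ⟩⟩
              · left; exact ⟨hM, hφ⟩
          · exact (ihφ _).2.mpr (fun M hM => hM.2)
          · exact (ihψ _).2.mpr (fun M hM => hM.2)
  | not φ ih =>
      intro 𝓜
      constructor
      · show Sat false φ 𝓜 ↔ _
        rw [(ih 𝓜).2]; rfl
      · show Sat true φ 𝓜 ↔ _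
        rw [(ih 𝓜).1]
        simp [Tarski]
  | ex x φ ih =>
      intro 𝓜
      constructor
      · constructor
        · rintro ⟨F, hF, hS⟩ M hM
          refine ⟨F M, hF M hM, ?_⟩
          exact (ih _).1.mp hS _ ⟨M, hM, rfl⟩
        · intro h
          classical
          refine ⟨fun M => if hM : M ∈ 𝓜 then (h M hM).choose else M.asg 0, ?_, ?_⟩
          · intro M hM; simp only [dif_pos hM]; exact (h M hM).choose_spec.1
          · refine (ih _).1.mpr ?_
            rintro N ⟨M, hM, rfl⟩
            simp only [dif_pos hM]
            exact (h M hM).choose_spec.2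
      · show Sat false φ (topSet 𝓜 x) ↔ _
        rw [(ih _).2]
        constructor
        · rintro h M hM ⟨a, ha, ht⟩
          exact h _ ⟨M, hM, a, ha, rfl⟩ ht
        · rintro h N ⟨M, hM, b, hb, rfl⟩ ht
          exact h M hM ⟨b, hb, ht⟩

/-- Flatness for negative satisfaction: `𝓜 ⊨⁻ φ` iff every member fails `φ` Tarski-style. -/
theorem modelSet_neg_iff_forall_not_tarski (φ : Fml Rel ar) (𝓜 : Set (Model U Rel ar)) :
    Sat false φ 𝓜 ↔ ∀ M ∈ 𝓜, ¬ Tarski M φ :=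
  (flat φ 𝓜).2
end

section
/- If a structure (M,f) satisfies the translated formula T(φ) for a sentence φ of L_C (with T(Cxψ) = ∃x(Dx ∧ T(ψ))), where D^M is nonempty, then the singleton model set {(M,f)} positively satisfies φ in the model-set semantics of L_C. -/
variable {U : Type} {Rel : Type} {ar : Rel → ℕ}

/-- Formulas of `L_C*`: first-order logic extended with the quantifier `Cx`. -/
inductive FmlC (Rel : Type) (ar : Rel → ℕ) : Type where
  | atom (r : Rel) (v : Fin (ar r) → ℕ)
  | eq (x y : ℕ)
  | and (φ ψ : FmlC Rel ar)
  | not (φ : FmlC Rel ar)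
  | ex (x : ℕ) (φ : FmlC Rel ar)
  | C (x : ℕ) (φ : FmlC Rel ar)

/-- The common domain of a model set: the intersection of all domains. -/
def commonDom (𝓜 : Set (Model U Rel ar)) : Set U :=
  { a | ∀ M ∈ 𝓜, a ∈ M.dom }

/-- `𝓜[A/x]`: extend every assignment by every element of `A`. -/
def subSet (𝓜 : Set (Model U Rel ar)) (x : ℕ) (A : Set U) : Set (Model U Rel ar) :=
  { N | ∃ M ∈ 𝓜, ∃ b ∈ A, N = setVar M x b }

/-- Model-set semantics for `L_C*`: `SatC true φ 𝓜` is `𝓜 ⊨⁺ φ`, `SatC false φ 𝓜`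
is `𝓜 ⊨⁻ φ`.  `Cx` is interpreted positively by a constant choice function into the
common domain, and negatively via all extensions by elements of the common domain. -/
def SatC : Bool → FmlC Rel ar → Set (Model U Rel ar) → Prop
  | pos, .atom r v, 𝓜 => ∀ M ∈ 𝓜, (M.rel r (fun i => M.asg (v i)) ↔ pos = true)
  | pos, .eq x y, 𝓜 => ∀ M ∈ 𝓜, (M.asg x = M.asg y ↔ pos = true)
  | true, .and φ ψ, 𝓜 => SatC true φ 𝓜 ∧ SatC true ψ 𝓜
  | false, .and φ ψ, 𝓜 =>
      ∃ 𝓜' 𝓜'', 𝓜' ∪ 𝓜'' = 𝓜 ∧ SatC false φ 𝓜' ∧ SatC false ψ 𝓜''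
  | pos, .not φ, 𝓜 => SatC (!pos) φ 𝓜
  | true, .ex x φ, 𝓜 =>
      ∃ F : Model U Rel ar → U, (∀ M ∈ 𝓜, F M ∈ M.dom) ∧ SatC true φ (updSet 𝓜 x F)
  | false, .ex x φ, 𝓜 => SatC false φ (topSet 𝓜 x)
  | true, .C x φ, 𝓜 =>
      ∃ a : U, (∀ M ∈ 𝓜, a ∈ M.dom) ∧ SatC true φ (updSet 𝓜 x (fun _ => a))
  | false, .C x φ, 𝓜 => SatC false φ (subSet 𝓜 x (commonDom 𝓜))

/-- No occurrence of `Cx` at all. -/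
def CFree : FmlC Rel ar → Prop
  | .atom _ _ => True
  | .eq _ _ => True
  | .and φ ψ => CFree φ ∧ CFree ψ
  | .not φ => CFree φ
  | .ex _ φ => CFree φ
  | .C _ _ => False

/-- Membership in the fragment `L_C`: `Cx` never occurs in the scope of a negation. -/
def LC : FmlC Rel ar → Prop
  | .atom _ _ => True
  | .eq _ _ => True
  | .and φ ψ => LC φ ∧ LC ψ
  | .not φ => CFree φ
  | .ex _ φ => LC φ
  | .C _ φ => LC φ

/-- Free variables of an `L_C*`-formula. -/
def fv : FmlC Rel ar → Set ℕ
  | .atom _ v => Set.range v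
  | .eq x y => {x, y}
  | .and φ ψ => fv φ ∪ fv ψ
  | .not φ => fv φ
  | .ex x φ => fv φ \ {x}
  | .C x φ => fv φ \ {x}

/-- The signature extended by a fresh unary predicate `D` (the symbol `none`). -/
def arD (ar : Rel → ℕ) : Option Rel → ℕ
  | none => 1
  | some r => ar r

/-- The translation `T` from `L_C` into first-order logic over the extended signature:
identity on first-order constructors, `T(Cxφ) = ∃x(Dx ∧ T(φ))`. -/
def T : FmlC Rel ar → Fml (Option Rel) (arD ar)
  | .atom r v => .atom (some r) v
  | .eq x y => .eq x y
  | .and φ ψ => .and (T φ) (T ψ)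
  | .not φ => .not (T φ)
  | .ex x φ => .ex x (T φ)
  | .C x φ => .ex x (.and (.atom none (fun _ => x)) (T φ))

/-- Expand a model by interpreting the fresh predicate `D` as the set `A`. -/
def expand (A : Set U) (M : Model U Rel ar) : Model U (Option Rel) (arD ar) where
  dom := M.dom
  rel := fun o => match o with
    | none => fun v => v ⟨0, Nat.one_pos⟩ ∈ A
    | some r => M.rel r
  asg := M.asg

/-- `𝓜_D`: expand every structure of `𝓜` by interpreting `D` as the common domain. -/
def expandSet (𝓜 : Set (Model U Rel ar)) : Set (Model U (Option Rel) (arD ar)) :=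
  expand (commonDom 𝓜) '' 𝓜

/-- Forget the predicate `D` of a model over the extended signature. -/
def restrict (M : Model U (Option Rel) (arD ar)) : Model U Rel ar where
  dom := M.dom
  rel := fun r => M.rel (some r)
  asg := M.asg

/-! Induction on `φ`. A witness `a ∈ Dom(M)` for `∃x` or `Cx` in `(M, f)` yields the constant
choice function `a` on the singleton `{(M, f)}`; it is admissible for `Cx` because the common
domain of a singleton is the domain of its model, so the conjunct `Dx` of `T(Cxψ)` is never
needed. In `L_C` negation only guards `C`-free formulas, and on those the model-set semantics
agrees with Tarskian semantics on every model set where the formula has constant truth value. -/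

def TarskiC : Model U Rel ar → FmlC Rel ar → Prop
  | M, .atom r v => M.rel r (fun i => M.asg (v i))
  | M, .eq x y => M.asg x = M.asg y
  | M, .and φ ψ => TarskiC M φ ∧ TarskiC M ψ
  | M, .not φ => ¬ TarskiC M φ
  | M, .ex x φ => ∃ a ∈ M.dom, TarskiC (setVar M x a) φ
  | M, .C x φ => ∃ a ∈ M.dom, TarskiC (setVar M x a) φ

theorem restrict_setVar (N : Model U (Option Rel) (arD ar)) (x : ℕ) (a : U) :
    restrict (setVar N x a) = setVar (restrict N) x a :=
  rfl

theorem updSet_singleton (M : Model U Rel ar) (x : ℕ) (F : Model U Rel ar → U) :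
    updSet {M} x F = {setVar M x (F M)} :=
  Set.image_singleton

theorem Model.exists_choice {𝓜 : Set (Model U Rel ar)} {P : Model U Rel ar → U → Prop}
    (h : ∀ M ∈ 𝓜, ∃ a, P M a) :
    ∃ F : Model U Rel ar → U, ∀ M ∈ 𝓜, P M (F M) := by
  classical
  -- `U` may be empty, but every model supplies the default value `M.asg 0`.
  refine ⟨fun M => if hM : ∃ a, P M a then hM.choose else M.asg 0, fun M hM => ?_⟩
  simp only [dif_pos (h M hM)]
  exact (h M hM).choose_spec

theorem tarski_T_iff {φ : FmlC Rel ar} (hC : CFree φ) (N : Model U (Option Rel) (arD ar)) :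
    Tarski N (T φ) ↔ TarskiC (restrict N) φ := by
  induction φ generalizing N with
  | atom r v => exact Iff.rfl
  | eq x y => exact Iff.rfl
  | and φ ψ ihφ ihψ => exact and_congr (ihφ hC.1 N) (ihψ hC.2 N)
  | not φ ih => exact not_congr (ih hC N)
  | ex x φ ih => exact exists_congr fun a => and_congr_right fun _ => ih hC _
  | C x φ => exact hC.elim

theorem satC_of_forall_tarskiC_iff {φ : FmlC Rel ar} (hC : CFree φ) {b : Bool}
    {𝓜 : Set (Model U Rel ar)} (h : ∀ M ∈ 𝓜, (TarskiC M φ ↔ b = true)) :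
    SatC b φ 𝓜 := by
  induction φ generalizing b 𝓜 with
  | atom r v => exact h
  | eq x y => exact h
  | and φ ψ ihφ ihψ =>
    cases b with
    | true =>
      exact ⟨ihφ hC.1 fun M hM => iff_of_true ((h M hM).2 rfl).1 rfl,
        ihψ hC.2 fun M hM => iff_of_true ((h M hM).2 rfl).2 rfl⟩
    | false =>
      refine ⟨{M ∈ 𝓜 | ¬ TarskiC M φ}, {M ∈ 𝓜 | ¬ TarskiC M ψ}, ?_,
        ihφ hC.1 fun M hM => iff_of_false hM.2 Bool.false_ne_true,
        ihψ hC.2 fun M hM => iff_of_false hM.2 Bool.false_ne_true⟩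
      rw [← Set.sep_or, Set.sep_eq_self_iff_mem_true]
      exact fun M hM => not_and_or.mp fun hφψ => Bool.false_ne_true ((h M hM).1 hφψ)
  | not φ ih =>
    refine ih hC fun M hM => ?_
    cases b <;> simpa [TarskiC] using h M hM
  | ex x φ ih =>
    cases b with
    | true =>
      obtain ⟨F, hF⟩ := Model.exists_choice fun M hM => (h M hM).2 rfl
      refine ⟨F, fun M hM => (hF M hM).1, ih hC ?_⟩
      rintro _ ⟨M, hM, rfl⟩
      exact iff_of_true (hF M hM).2 rfl
    | false =>
      refine ih hC ?_
      rintro _ ⟨M, hM, a, ha, rfl⟩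
      exact iff_of_false (fun hφ => Bool.false_ne_true ((h M hM).1 ⟨a, ha, hφ⟩))
        Bool.false_ne_true
  | C x φ => exact hC.elim

theorem satC_singleton_restrict_of_tarski_T {φ : FmlC Rel ar} (hLC : LC φ)
    {N : Model U (Option Rel) (arD ar)} (h : Tarski N (T φ)) :
    SatC true φ ({restrict N} : Set (Model U Rel ar)) := by
  induction φ generalizing N with
  | atom r v => rintro _ rfl; exact iff_of_true h rfl
  | eq x y => rintro _ rfl; exact iff_of_true h rfl
  | and φ ψ ihφ ihψ => exact ⟨ihφ hLC.1 h.1, ihψ hLC.2 h.2⟩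
  | not φ =>
    refine satC_of_forall_tarskiC_iff hLC ?_
    rintro _ rfl
    exact iff_of_false (fun hφ => h ((tarski_T_iff hLC N).2 hφ)) Bool.false_ne_true
  | ex x φ ih =>
    obtain ⟨a, ha, h⟩ := h
    refine ⟨fun _ => a, by rintro _ rfl; exact ha, ?_⟩
    rw [updSet_singleton, ← restrict_setVar]
    exact ih hLC h
  | C x φ ih =>
    obtain ⟨a, ha, -, h⟩ := h
    refine ⟨a, by rintro _ rfl; exact ha, ?_⟩
    rw [updSet_singleton, ← restrict_setVar]
    exact ih hLC h

theorem translation_sat_to_singleton_general {U : Type} (φ : FmlC Rel ar)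
    (hLC : LC φ) (M : Model U (Option Rel) (arD ar))
    (hsat : Tarski M (T φ)) :
    SatC true φ ({restrict M} : Set (Model U Rel ar)) :=
  satC_singleton_restrict_of_tarski_T hLC hsat

/-- If a structure with nonempty `D`-interpretation Tarski-satisfies `T(φ)` for a
sentence `φ` of `L_C`, then the singleton model set of its `D`-free restriction
positively satisfies `φ`. -/
theorem translation_sat_to_singleton {U : Type} (φ : FmlC Rel ar)
    (hLC : LC φ) (hsent : fv φ = ∅) (M : Model U (Option Rel) (arD ar))
    (hD : ∃ a : U, M.rel none (fun _ => a))
    (hsat : Tarski M (T φ)) :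
    SatC true φ ({restrict M} : Set (Model U Rel ar)) :=
  translation_sat_to_singleton_general φ hLC M hsat
end
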